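/- arXiv:2505.15569 — 2 statements merged into one kernel-verified Lean document; each statement's English description precedes it below -/
import Mathlib

section
/- The map τ satisfies the Yang–Baxter equation on V ⊗ V ⊗ V: (τ ⊗ id_V) ∘ (id_V ⊗ τ) ∘ (τ ⊗ id_V) = (id_V ⊗ τ) ∘ (τ ⊗ id_V) ∘ (id_V ⊗ τ), where the two maps are compared after identifying (V ⊗ V) ⊗ V with V ⊗ (V ⊗ V) via the canonical associator. -/
/-!
Both sides are checked on the basis vectors `e a ⊗ e b ⊗ e c`. Expanding, each side is a
combination of the tensors `e σ(a) ⊗ e σ(b) ⊗ e σ(c)` over permutations `σ`, with coefficients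
that depend only on the relative order of `a`, `b`, `c`; in each of the thirteen possible
configurations the two combinations agree by a polynomial identity in `p`.
-/

open scoped TensorProduct

set_option maxSynthPendingDepth 2

/-- Heaviside theta symbol: `theta a b = 1` if `a > b`, else `0`. -/
def theta {ι : Type*} [LinearOrder ι] (a b : ι) : ℕ := if b < a then 1 else 0

set_option synthInstance.maxHeartbeats 200000

section theta

variable {ι : Type*} [LinearOrder ι] {a b : ι}

theorem theta_of_lt (h : a < b) : theta a b = 0 := if_neg h.asymm

theorem theta_of_gt (h : b < a) : theta a b = 1 := if_pos h

theorem theta_self (a : ι) : theta a a = 0 := if_neg (lt_irrefl a)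

end theta

/-- `τ` satisfies the Yang–Baxter equation on `V ⊗ V ⊗ V`:
`(τ ⊗ id) ∘ (id ⊗ τ) ∘ (τ ⊗ id) = (id ⊗ τ) ∘ (τ ⊗ id) ∘ (id ⊗ τ)`, where `id ⊗ τ` is
transported to `(V ⊗ V) ⊗ V` via the canonical associator. -/
theorem tau_yang_baxter (F : Type*) [Field F] (p : F) (ι : Type*) [LinearOrder ι]
    (τ : ((ι →₀ F) ⊗[F] (ι →₀ F)) →ₗ[F] ((ι →₀ F) ⊗[F] (ι →₀ F)))
    (hτ : ∀ a b : ι,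
      τ (Finsupp.single a 1 ⊗ₜ[F] Finsupp.single b 1) =
        (p ^ theta a b - 1) • (Finsupp.single a 1 ⊗ₜ[F] Finsupp.single b 1)
          - p ^ theta b a • (Finsupp.single b 1 ⊗ₜ[F] Finsupp.single a 1)) :
    (LinearMap.rTensor (ι →₀ F) τ) ∘ₗ
        ((TensorProduct.assoc F (ι →₀ F) (ι →₀ F) (ι →₀ F)).symm.toLinearMap ∘ₗ
          LinearMap.lTensor (ι →₀ F) τ ∘ₗ
          (TensorProduct.assoc F (ι →₀ F) (ι →₀ F) (ι →₀ F)).toLinearMap) ∘ₗ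
        (LinearMap.rTensor (ι →₀ F) τ) =
      ((TensorProduct.assoc F (ι →₀ F) (ι →₀ F) (ι →₀ F)).symm.toLinearMap ∘ₗ
          LinearMap.lTensor (ι →₀ F) τ ∘ₗ
          (TensorProduct.assoc F (ι →₀ F) (ι →₀ F) (ι →₀ F)).toLinearMap) ∘ₗ
        (LinearMap.rTensor (ι →₀ F) τ) ∘ₗ
        ((TensorProduct.assoc F (ι →₀ F) (ι →₀ F) (ι →₀ F)).symm.toLinearMap ∘ₗ
          LinearMap.lTensor (ι →₀ F) τ ∘ₗ
          (TensorProduct.assoc F (ι →₀ F) (ι →₀ F) (ι →₀ F)).toLinearMap) := by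
  ext a b c
  simp only [TensorProduct.AlgebraTensorModule.curry_apply, TensorProduct.curry_apply,
    LinearMap.coe_comp, LinearMap.coe_restrictScalars, Function.comp_apply,
    Finsupp.lsingle_apply, LinearEquiv.coe_coe, LinearMap.rTensor_tmul,
    LinearMap.lTensor_tmul, TensorProduct.assoc_tmul, TensorProduct.assoc_symm_tmul, hτ,
    map_sub, map_smul, TensorProduct.sub_tmul, TensorProduct.tmul_sub,
    ← TensorProduct.smul_tmul', TensorProduct.tmul_smul]
  rcases lt_trichotomy a b with hab | hab | hab <;>
  rcases lt_trichotomy b c with hbc | hbc | hbc <;>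
  rcases lt_trichotomy a c with hac | hac | hac <;>
  first
  | (exfalso; order)
  | (subst_vars; simp only [theta_of_lt, theta_of_gt, theta_self, pow_zero, pow_one, *] <;> module)
end

section
/- For every k ∈ ℕ and all finite subsets E, F of ι, the k-th powers of the operators R and L on W are given by R^k f_{E,F} = [k]_p! · Σ_{A ⊆ E∖F, |A| = k} (−p)^{θ(E∖A, A)} (−1)^{θ(A, F)} f_{E∖A, A∪F} and L^k f_{E,F} = [k]_p! · Σ_{B ⊆ F∖E, |B| = k} (−p)^{θ(B, F∖B)} (−1)^{θ(E, B)} f_{E∪B, F∖B}, where [k]_p! = Π_{i=1}^{k} (1 + p + ⋯ + p^{i−1}). (Equivalently, the divided powers R^{⟨k⟩} = R^k/[k]_p! and L^{⟨k⟩} = L^k/[k]_p! equal (id⊗∇)(Δ_{(k}⊗id) and (∇⊗id)(id⊗Δ_{k)}) respectively.) -/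
/-! Applying `R` to `f_{E\A, A∪F}` and moving one more element `a` out of `E∖F` multiplies the
coefficient by `p ^ θ({a}, A)`, where `θ({a}, A)` is the position of `a` in `A ∪ {a}` counted from
below. Each `(k+1)`-subset of `E∖F` is reached from each of its elements, so the new coefficient
is `1 + p + ⋯ + p^k` times the expected one, and induction on `k` gives the `q`-factorial.
`L` is `R` for the reversed order on `ι` with the two tensor factors exchanged. -/

set_option maxSynthPendingDepth 2

/-- Heaviside theta symbol for finite sets: the number of pairs `(a, b) ∈ A × B` with `a > b`. -/
def Theta {ι : Type*} [LinearOrder ι] (A B : Finset ι) : ℕ :=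
  ∑ a ∈ A, ∑ b ∈ B, if b < a then 1 else 0

/-- The q-factorial `[k]_p! = Π_{i=1}^{k} (1 + p + ⋯ + p^{i−1})`. -/
def qfact {R : Type*} [CommRing R] (p : R) (k : ℕ) : R :=
  ∏ i ∈ Finset.range k, ∑ j ∈ Finset.range (i + 1), p ^ j

open Finset

theorem Finset.sum_powersetCard_sum_sdiff_insert {α β : Type*} [DecidableEq α] [AddCommMonoid β]
    (X : Finset α) (k : ℕ) (g : Finset α → α → β) :
    ∑ A ∈ X.powersetCard k, ∑ a ∈ X \ A, g (insert a A) a =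
      ∑ A ∈ X.powersetCard (k + 1), ∑ a ∈ A, g A a := by
  rw [sum_sigma', sum_sigma']
  refine sum_nbij' (fun x => ⟨insert x.2 x.1, x.2⟩) (fun y => ⟨y.1.erase y.2, y.2⟩)
    ?_ ?_ ?_ ?_ fun _ _ => rfl
  · rintro ⟨A, a⟩ h
    simp only [mem_sigma, mem_powersetCard, mem_sdiff] at h ⊢
    obtain ⟨⟨hAX, rfl⟩, haX, haA⟩ := h
    exact ⟨⟨insert_subset haX hAX, card_insert_of_notMem haA⟩, mem_insert_self a A⟩
  · rintro ⟨A, a⟩ h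
    simp only [mem_sigma, mem_powersetCard, mem_sdiff] at h ⊢
    obtain ⟨⟨hAX, hA⟩, haA⟩ := h
    exact ⟨⟨(erase_subset a A).trans hAX, by rw [card_erase_of_mem haA, hA, Nat.add_sub_cancel]⟩,
      hAX haA, notMem_erase a A⟩
  · rintro ⟨A, a⟩ h
    simp only [mem_sigma, mem_sdiff] at h
    simp [erase_insert h.2.2]
  · rintro ⟨A, a⟩ h
    simp only [mem_sigma] at h
    simp [insert_erase h.2]

section Theta

variable {ι : Type*} [LinearOrder ι]

theorem Theta_insert_left {a : ι} {A B : Finset ι} (ha : a ∉ A) :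
    Theta (insert a A) B = Theta {a} B + Theta A B := by
  simp [Theta, sum_insert ha]

theorem Theta_insert_right {b : ι} {A B : Finset ι} (hb : b ∉ B) :
    Theta A (insert b B) = Theta A {b} + Theta A B := by
  simp only [Theta, sum_insert hb, sum_singleton, sum_add_distrib]

theorem Theta_union_right {A B C : Finset ι} (h : Disjoint B C) :
    Theta A (B ∪ C) = Theta A B + Theta A C := by
  simp only [Theta, sum_union h, sum_add_distrib]

theorem Theta_singleton_singleton (a b : ι) : Theta {a} {b} = if b < a then 1 else 0 := by
  simp only [Theta, sum_singleton]

theorem Theta_orderDual (A B : Finset ιᵒᵈ) : Theta A B = Theta (ι := ι) B A := by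
  unfold Theta
  rw [sum_comm]
  rfl

theorem sum_pow_Theta_singleton_erase {K : Type*} [Semiring K] (p : K) (S : Finset ι) :
    ∑ a ∈ S, p ^ Theta {a} (S.erase a) = ∑ j ∈ range #S, p ^ j := by
  induction S using Finset.induction_on_max with
  | empty => simp
  | insert a S ha IH =>
    have haS : a ∉ S := fun h => lt_irrefl a (ha a h)
    have h_top : Theta {a} S = #S := by
      simp only [Theta, sum_singleton, card_eq_sum_ones]
      exact sum_congr rfl fun b hb => if_pos (ha b hb)
    have h_rest : ∀ b ∈ S, Theta {b} ((insert a S).erase b) = Theta {b} (S.erase b) := by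
      intro b hb
      rw [erase_insert_of_ne (ne_of_gt (ha b hb)), Theta_insert_right (by simp [haS]),
        Theta_singleton_singleton, if_neg (ha b hb).not_gt, zero_add]
    rw [sum_insert haS, erase_insert haS, h_top, sum_congr rfl fun b hb => by rw [h_rest b hb],
      IH, card_insert_of_notMem haS, sum_range_succ, add_comm]

end Theta

section Transfer

variable {ι K M : Type*} [LinearOrder ι] [CommRing K] [AddCommMonoid M] [Module K M]

/-- The coefficient of `f_{E∖A, A∪F}` in `R^{⟨#A⟩} f_{E,F}`. -/
def transferCoeff (p : K) (E F A : Finset ι) : K :=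
  (-p) ^ Theta (E \ A) A * (-1) ^ Theta A F

theorem transferCoeff_empty (p : K) (E F : Finset ι) : transferCoeff p E F ∅ = 1 := by
  simp [transferCoeff, Theta]

theorem transferCoeff_mul_transferCoeff_singleton (p : K) {E F A : Finset ι} {a : ι}
    (haE : a ∈ E) (haA : a ∉ A) (hAF : Disjoint A F) :
    transferCoeff p E F A * transferCoeff p (E \ A) (A ∪ F) {a} =
      p ^ Theta {a} A * transferCoeff p E F (insert a A) := by
  have hE : E \ A = insert a (E \ insert a A) := by
    ext x; by_cases hx : x = a <;> simp [hx, haE, haA]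
  have hp : Theta (E \ A) A + Theta ((E \ A) \ {a}) {a} =
      Theta (E \ insert a A) (insert a A) + Theta {a} A := by
    rw [sdiff_sdiff_left, sup_eq_union, union_singleton, hE, Theta_insert_left (by simp),
      Theta_insert_right haA]
    omega
  have hs : Theta A F + Theta {a} (A ∪ F) = Theta (insert a A) F + Theta {a} A := by
    rw [Theta_union_right hAF, Theta_insert_left haA]
    omega
  have hsign : (-p) ^ Theta {a} A * (-1) ^ Theta {a} A = p ^ Theta {a} A := by
    rw [← mul_pow, neg_mul_neg, mul_one]
  unfold transferCoeff
  calc _ = (-p) ^ (Theta (E \ A) A + Theta ((E \ A) \ {a}) {a}) *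
        (-1) ^ (Theta A F + Theta {a} (A ∪ F)) := by ring
    _ = _ := by rw [hp, hs, pow_add, pow_add, ← hsign]; ring

theorem pow_apply_eq_qfact_smul_sum (p : K) (T : M →ₗ[K] M) (e : Finset ι → Finset ι → M)
    (hT : ∀ E F, T (e E F) = ∑ a ∈ E \ F, transferCoeff p E F {a} • e (E \ {a}) (F ∪ {a}))
    (k : ℕ) (E F : Finset ι) :
    (T ^ k) (e E F) =
      qfact p k • ∑ A ∈ (E \ F).powersetCard k, transferCoeff p E F A • e (E \ A) (A ∪ F) := by
  induction k with
  | zero => simp [qfact, transferCoeff_empty]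
  | succ k IH =>
    have hstep : ∀ A ∈ (E \ F).powersetCard k,
        T (transferCoeff p E F A • e (E \ A) (A ∪ F)) = ∑ a ∈ (E \ F) \ A,
          (p ^ Theta {a} A * transferCoeff p E F (insert a A)) •
            e (E \ insert a A) (insert a A ∪ F) := by
      intro A hA
      obtain ⟨hAEF, -⟩ := mem_powersetCard.mp hA
      have hAF : Disjoint A F := disjoint_of_subset_left hAEF sdiff_disjoint
      have hpool : (E \ A) \ (A ∪ F) = (E \ F) \ A := by
        ext x; simp only [mem_sdiff, mem_union]; tauto
      rw [map_smul, hT, hpool, smul_sum]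
      refine sum_congr rfl fun a ha => ?_
      obtain ⟨haEF, haA⟩ := mem_sdiff.mp ha
      rw [smul_smul, transferCoeff_mul_transferCoeff_singleton p (mem_sdiff.mp haEF).1 haA hAF,
        sdiff_sdiff_left, sup_eq_union, union_right_comm, union_singleton]
    have hcount : ∀ A ∈ (E \ F).powersetCard (k + 1),
        ∑ a ∈ A, p ^ Theta {a} (A.erase a) = ∑ j ∈ range (k + 1), p ^ j := by
      intro A hA
      rw [sum_pow_Theta_singleton_erase, (mem_powersetCard.mp hA).2]
    calc (T ^ (k + 1)) (e E F)
        = qfact p k • ∑ A ∈ (E \ F).powersetCard k, ∑ a ∈ (E \ F) \ A,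
            (p ^ Theta {a} A * transferCoeff p E F (insert a A)) •
              e (E \ insert a A) (insert a A ∪ F) := by
          rw [pow_succ', Module.End.mul_apply, IH, map_smul, map_sum, sum_congr rfl hstep]
      _ = qfact p k • ∑ A ∈ (E \ F).powersetCard (k + 1), ∑ a ∈ A,
            (p ^ Theta {a} (A.erase a) * transferCoeff p E F A) • e (E \ A) (A ∪ F) := by
          rw [← sum_powersetCard_sum_sdiff_insert]
          refine congrArg _ (sum_congr rfl fun A hA => sum_congr rfl fun a ha => ?_)
          rw [erase_insert (mem_sdiff.mp ha).2]
      _ = qfact p (k + 1) • ∑ A ∈ (E \ F).powersetCard (k + 1),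
            transferCoeff p E F A • e (E \ A) (A ∪ F) := by
          simp only [← smul_smul, ← sum_smul]
          rw [sum_congr rfl fun A hA => by rw [hcount A hA], ← smul_sum, smul_smul, qfact, qfact,
            prod_range_succ]

end Transfer

/-- Formulas for the `k`-th powers of the operators `R` and `L` on `W = Λ_p(V) ⊗ Λ_p(V)`:
`R^k f_{E,F} = [k]_p! Σ_{A ⊆ E∖F, |A|=k} (−p)^{θ(E∖A,A)} (−1)^{θ(A,F)} f_{E∖A, A∪F}` and
`L^k f_{E,F} = [k]_p! Σ_{B ⊆ F∖E, |B|=k} (−p)^{θ(B,F∖B)} (−1)^{θ(E,B)} f_{E∪B, F∖B}`. -/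
theorem pow_R_pow_L (F : Type*) [Field F] (p : F) (ι : Type*) [LinearOrder ι]
    (L R : ((Finset ι × Finset ι) →₀ F) →ₗ[F] ((Finset ι × Finset ι) →₀ F))
    (hL : ∀ E Fs : Finset ι,
      L (Finsupp.single (E, Fs) 1) =
        ∑ b ∈ Fs \ E, ((-p) ^ Theta {b} (Fs \ {b}) * (-1 : F) ^ Theta E {b}) •
          Finsupp.single (E ∪ {b}, Fs \ {b}) 1)
    (hR : ∀ E Fs : Finset ι,
      R (Finsupp.single (E, Fs) 1) =
        ∑ a ∈ E \ Fs, ((-p) ^ Theta (E \ {a}) {a} * (-1 : F) ^ Theta {a} Fs) •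
          Finsupp.single (E \ {a}, Fs ∪ {a}) 1)
    (k : ℕ) (E Fs : Finset ι) :
    (R ^ k) (Finsupp.single (E, Fs) 1) =
      qfact p k • ∑ A ∈ (E \ Fs).powersetCard k,
        ((-p) ^ Theta (E \ A) A * (-1 : F) ^ Theta A Fs) •
          Finsupp.single (E \ A, A ∪ Fs) (1 : F) ∧
    (L ^ k) (Finsupp.single (E, Fs) 1) =
      qfact p k • ∑ B ∈ (Fs \ E).powersetCard k,
        ((-p) ^ Theta B (Fs \ B) * (-1 : F) ^ Theta E B) •
          Finsupp.single (E ∪ B, Fs \ B) (1 : F) := by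
  refine ⟨pow_apply_eq_qfact_smul_sum p R (fun E Fs => Finsupp.single (E, Fs) 1) hR k E Fs, ?_⟩
  let e : Finset ιᵒᵈ → Finset ιᵒᵈ → (Finset ι × Finset ι) →₀ F :=
    fun X Y => Finsupp.single (Y, X) 1
  have hL' : ∀ X Y : Finset ιᵒᵈ,
      L (e X Y) = ∑ b ∈ X \ Y, transferCoeff p X Y {b} • e (X \ {b}) (Y ∪ {b}) := by
    intro X Y
    simp only [transferCoeff, Theta_orderDual]
    exact hL Y X
  have hLk : ∀ X Y : Finset ιᵒᵈ, (L ^ k) (e X Y) = qfact p k • ∑ B ∈ (X \ Y).powersetCard k,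
      ((-p) ^ Theta (ι := ι) B (X \ B) * (-1 : F) ^ Theta (ι := ι) Y B) • e (X \ B) (Y ∪ B) := by
    intro X Y
    have h := pow_apply_eq_qfact_smul_sum p L e hL' k X Y
    simp only [transferCoeff, Theta_orderDual, union_comm] at h
    exact h
  exact hLk Fs E
end
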